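/- arXiv:1709.06832 — 3 statements merged into one kernel-verified Lean document; each statement's English description precedes it below -/
import Mathlib

section
/- Let M ≥ 1, c ∈ ℂ^M, and define the trigonometric polynomial v(f) = Σ_{i=0}^{M−1} c_i·exp(2πi·f·i) for f ∈ ℝ. Then for all f₁, f₂ ∈ ℝ, |v(f₁)| − |v(f₂)| ≤ 2π·M·|f₁ − f₂| · sup_{f ∈ [0,1)} |v(f)|. -/
/-!
Bernstein's inequality `‖p'(z)‖ ≤ n · sup_{|w| = 1} ‖p(w)‖` on the unit circle, for `deg p ≤ n`,
proved with a discrete kernel. Let `N = 2n + 1` and `ζ` a primitive `N`-th root of unity. The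
polynomial `Q = X · (1 + X + ⋯ + X^(n-1))²` has `k` as its coefficient of `X^k` for `k ≤ n`, so
discrete Fourier inversion gives `N · z p'(z) = ∑ₘ Q(ζᵐ) p(z ζ⁻ᵐ)`. On the circle
`‖Q(x)‖ = x⁻ⁿ Q(x)`, so the same inversion at `k = n` shows that the weights `‖Q(ζᵐ)‖` have total
mass `N n`. Writing `v(f) = p(e^{2πif})`, the chain rule and the mean value theorem turn this
derivative bound into the Lipschitz bound.
-/

open Complex ComplexConjugate Finset Polynomial
open scoped Real

namespace IsPrimitiveRoot

variable {K : Type*} [Field K] {ζ : K} {N : ℕ}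

theorem geom_sum_zpow_eq_zero (hζ : IsPrimitiveRoot ζ N) {j : ℤ} (hj : ¬ (N : ℤ) ∣ j) :
    ∑ m ∈ range N, (ζ ^ j) ^ m = 0 := by
  have hne : ζ ^ j ≠ 1 := mt (hζ.zpow_eq_one_iff_dvd j).1 hj
  rw [geom_sum_eq hne, ← zpow_natCast, ← zpow_mul, mul_comm, zpow_mul, zpow_natCast,
    hζ.pow_eq_one, one_zpow, sub_self, zero_div]

theorem sum_inv_pow_mul_eval (hζ : IsPrimitiveRoot ζ N) {Q : K[X]} (hQ : Q.natDegree < N)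
    {k : ℕ} (hk : k < N) :
    ∑ m ∈ range N, ((ζ ^ m)⁻¹) ^ k * Q.eval (ζ ^ m) = N * Q.coeff k := by
  have hζ0 : ζ ≠ 0 := hζ.ne_zero (by omega)
  have horth : ∀ j ∈ range N,
      ∑ m ∈ range N, (ζ ^ ((j : ℤ) - k)) ^ m = if j = k then (N : K) else 0 := by
    intro j hj
    split_ifs with hjk
    · simp [hjk]
    · refine hζ.geom_sum_zpow_eq_zero fun hdvd => hjk ?_
      have := Int.eq_zero_of_abs_lt_dvd hdvd (by rw [mem_range] at hj; rw [abs_lt]; omega)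
      omega
  calc ∑ m ∈ range N, ((ζ ^ m)⁻¹) ^ k * Q.eval (ζ ^ m)
      = ∑ j ∈ range N, Q.coeff j * ∑ m ∈ range N, (ζ ^ ((j : ℤ) - k)) ^ m := by
        simp_rw [eval_eq_sum_range' hQ, mul_sum]
        rw [sum_comm]
        refine sum_congr rfl fun j _ => sum_congr rfl fun m _ => ?_
        rw [zpow_sub₀ hζ0, zpow_natCast, zpow_natCast]
        field_simp
        ring
    _ = N * Q.coeff k := by
        rw [sum_congr rfl fun j hj => by rw [horth j hj]]
        simp [hk, mul_comm]

end IsPrimitiveRoot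

noncomputable def bernsteinKernel (R : Type*) [CommSemiring R] (n : ℕ) : R[X] :=
  X * (∑ a ∈ range n, X ^ a) ^ 2

section bernsteinKernel

variable {R : Type*} [CommSemiring R]

theorem natDegree_bernsteinKernel_lt (n : ℕ) : (bernsteinKernel R n).natDegree < 2 * n + 1 := by
  rcases n with _ | n
  · simp [bernsteinKernel]
  have hD : (∑ a ∈ range (n + 1), (X : R[X]) ^ a).natDegree ≤ n :=
    natDegree_sum_le_of_forall_le _ _ fun a ha =>
      (natDegree_X_pow_le a).trans (Nat.lt_succ_iff.1 (mem_range.1 ha))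
  calc (bernsteinKernel R (n + 1)).natDegree ≤ 1 + 2 * n :=
        natDegree_mul_le.trans (add_le_add natDegree_X_le
          (natDegree_pow_le.trans (Nat.mul_le_mul_left 2 hD)))
    _ < 2 * (n + 1) + 1 := by omega

theorem coeff_bernsteinKernel {n k : ℕ} (hk : k ≤ n) : (bernsteinKernel R n).coeff k = k := by
  rcases k with _ | k
  · simp [bernsteinKernel]
  have hD : ∀ a ≤ k, (∑ i ∈ range n, (X : R[X]) ^ i).coeff a = 1 := fun a ha => by
    simp [finsetSum_coeff, coeff_X_pow]; omega
  rw [bernsteinKernel, coeff_X_mul, sq, coeff_mul,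
    sum_congr rfl fun x hx => by
      rw [hD x.1 (HasAntidiagonal.antidiagonal.fst_le hx),
        hD x.2 (HasAntidiagonal.antidiagonal.snd_le hx), one_mul]]
  simp

end bernsteinKernel

theorem inv_pow_mul_eval_bernsteinKernel {x : ℂ} (hx : ‖x‖ = 1) (n : ℕ) :
    (x ^ n)⁻¹ * (bernsteinKernel ℂ n).eval x = ‖(bernsteinKernel ℂ n).eval x‖ := by
  have hx0 : x ≠ 0 := norm_ne_zero_iff.1 (by rw [hx]; exact one_ne_zero)
  set d := (∑ a ∈ range n, (X : ℂ[X]) ^ a).eval x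
  -- on the unit circle `conj d = ∑ x⁻ᵃ`, and multiplying by `xⁿ` reverses the sum
  have hreflect : x ^ n * conj d = x * d := by
    simp only [d, eval_finsetSum, eval_pow, eval_X, map_sum, map_pow, ← inv_eq_conj hx, mul_sum]
    rw [← sum_range_reflect]
    refine sum_congr rfl fun a ha => ?_
    have ha := mem_range.1 ha
    rw [inv_pow, ← pow_sub₀ _ hx0 (by omega), show n - (n - 1 - a) = a + 1 by omega, pow_succ']
  have heval : (bernsteinKernel ℂ n).eval x = x * d ^ 2 := by simp [bernsteinKernel, d]
  rw [heval, norm_mul, hx, one_mul, norm_pow, ofReal_pow, ← conj_mul', sq, ← mul_assoc x,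
    ← hreflect]
  field_simp

theorem Polynomial.mul_eval_derivative_eq_sum_range {R : Type*} [CommSemiring R] {p : R[X]}
    {N : ℕ} (hp : p.natDegree < N) (z : R) :
    z * p.derivative.eval z = ∑ k ∈ range N, k * p.coeff k * z ^ k := by
  rw [derivative_eval, sum_over_range' _ (by simp) N hp, mul_sum]
  refine sum_congr rfl fun k _ => ?_
  rcases k with _ | k
  · simp
  · simp only [Nat.add_sub_cancel, pow_succ]
    ring

theorem IsPrimitiveRoot.mul_eval_derivative_eq_sum_bernsteinKernel {K : Type*} [Field K] {ζ : K}
    {n : ℕ} (hζ : IsPrimitiveRoot ζ (2 * n + 1)) {p : K[X]} (hp : p.natDegree ≤ n) (z : K) :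
    (2 * n + 1 : ℕ) * (z * p.derivative.eval z)
      = ∑ m ∈ range (2 * n + 1),
          (bernsteinKernel K n).eval (ζ ^ m) * p.eval (z * (ζ ^ m)⁻¹) := by
  have hp' : p.natDegree < n + 1 := Nat.lt_succ_of_le hp
  calc ((2 * n + 1 : ℕ) : K) * (z * p.derivative.eval z)
      = ∑ k ∈ range (n + 1),
          ((2 * n + 1 : ℕ) * (bernsteinKernel K n).coeff k) * p.coeff k * z ^ k := by
        rw [p.mul_eval_derivative_eq_sum_range hp', mul_sum]
        refine sum_congr rfl fun k hk => ?_
        rw [coeff_bernsteinKernel (Nat.lt_succ_iff.1 (mem_range.1 hk))]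
        ring
    _ = ∑ k ∈ range (n + 1), ∑ m ∈ range (2 * n + 1),
          ((ζ ^ m)⁻¹) ^ k * (bernsteinKernel K n).eval (ζ ^ m) * p.coeff k * z ^ k := by
        refine sum_congr rfl fun k hk => ?_
        rw [← hζ.sum_inv_pow_mul_eval (natDegree_bernsteinKernel_lt n) (by
          have := mem_range.1 hk; omega), sum_mul, sum_mul]
    _ = ∑ m ∈ range (2 * n + 1),
          (bernsteinKernel K n).eval (ζ ^ m) * p.eval (z * (ζ ^ m)⁻¹) := by
        rw [sum_comm]
        refine sum_congr rfl fun m _ => ?_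
        rw [eval_eq_sum_range' hp', mul_sum]
        refine sum_congr rfl fun k _ => ?_
        ring

theorem Polynomial.norm_derivative_eval_le {p : ℂ[X]} {n : ℕ} (hp : p.natDegree ≤ n) {S : ℝ}
    (hS : ∀ w : ℂ, ‖w‖ = 1 → ‖p.eval w‖ ≤ S) {z : ℂ} (hz : ‖z‖ = 1) :
    ‖p.derivative.eval z‖ ≤ n * S := by
  have hN : 2 * n + 1 ≠ 0 := by omega
  obtain ⟨ζ, hζ⟩ : ∃ ζ : ℂ, IsPrimitiveRoot ζ (2 * n + 1) :=
    ⟨_, Complex.isPrimitiveRoot_exp _ hN⟩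
  have hζm : ∀ m : ℕ, ‖ζ ^ m‖ = 1 := fun m => by rw [norm_pow, hζ.norm'_eq_one hN, one_pow]
  -- `‖Q(ζᵐ)‖ = ζ⁻ᵐⁿ Q(ζᵐ)`, so the total mass is the inversion formula at `k = n`
  have hmass : ∑ m ∈ range (2 * n + 1), ‖(bernsteinKernel ℂ n).eval (ζ ^ m)‖
      = (2 * n + 1 : ℕ) * n := by
    have := hζ.sum_inv_pow_mul_eval (natDegree_bernsteinKernel_lt n) (by omega : n < 2 * n + 1)
    rw [sum_congr rfl fun m _ => by rw [inv_pow, inv_pow_mul_eval_bernsteinKernel (hζm m)],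
      coeff_bernsteinKernel le_rfl] at this
    exact_mod_cast this
  have hsum : ((2 * n + 1 : ℕ) : ℝ) * ‖p.derivative.eval z‖ ≤ (2 * n + 1 : ℕ) * (n * S) :=
    calc ((2 * n + 1 : ℕ) : ℝ) * ‖p.derivative.eval z‖
        = ‖((2 * n + 1 : ℕ) : ℂ) * (z * p.derivative.eval z)‖ := by
          rw [norm_mul, norm_mul, hz, one_mul, Complex.norm_natCast]
      _ = ‖∑ m ∈ range (2 * n + 1),
            (bernsteinKernel ℂ n).eval (ζ ^ m) * p.eval (z * (ζ ^ m)⁻¹)‖ := by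
          rw [hζ.mul_eval_derivative_eq_sum_bernsteinKernel hp]
      _ ≤ ∑ m ∈ range (2 * n + 1), ‖(bernsteinKernel ℂ n).eval (ζ ^ m)‖ * S :=
          norm_sum_le_of_le _ fun m _ => by
            rw [norm_mul]
            exact mul_le_mul_of_nonneg_left (hS _ (by rw [norm_mul, norm_inv, hz, hζm, inv_one,
              one_mul])) (norm_nonneg _)
      _ = (2 * n + 1 : ℕ) * (n * S) := by rw [← sum_mul, hmass, mul_assoc]
  exact le_of_mul_le_mul_left hsum (by positivity)

theorem norm_cexp_two_pi_I_mul (t : ℝ) : ‖exp (2 * π * I * t)‖ = 1 := by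
  rw [Complex.norm_exp]
  simp

theorem exists_mem_Ico_cexp_two_pi_I_mul_eq {w : ℂ} (hw : ‖w‖ = 1) :
    ∃ t ∈ Set.Ico (0 : ℝ) 1, exp (2 * π * I * t) = w := by
  obtain ⟨θ, rfl⟩ := (norm_eq_one_iff w).1 hw
  refine ⟨Int.fract (θ / (2 * π)), ⟨Int.fract_nonneg _, Int.fract_lt_one _⟩, ?_⟩
  refine exp_eq_exp_iff_exists_int.2 ⟨-⌊θ / (2 * π)⌋, ?_⟩
  rw [Int.fract]
  push_cast
  field_simp
  ring

theorem Polynomial.norm_eval_cexp_sub_le {p : ℂ[X]} {n : ℕ} (hp : p.natDegree ≤ n) {S : ℝ}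
    (hS : ∀ w : ℂ, ‖w‖ = 1 → ‖p.eval w‖ ≤ S) (f₁ f₂ : ℝ) :
    ‖p.eval (exp (2 * π * I * f₁)) - p.eval (exp (2 * π * I * f₂))‖
      ≤ 2 * π * n * |f₁ - f₂| * S := by
  have hderiv : ∀ t : ℝ, HasDerivAt (fun s : ℝ => p.eval (exp (2 * π * I * s)))
      (p.derivative.eval (exp (2 * π * I * t)) * (2 * π * I * exp (2 * π * I * t))) t := by
    intro t
    have hlin : HasDerivAt (fun s : ℝ => 2 * π * I * s) (2 * π * I) t := by
      simpa using ((hasDerivAt_id t).ofReal_comp).const_mul (2 * π * I)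
    exact (p.hasDerivAt _).comp t (hlin.cexp.congr_deriv (mul_comm _ _))
  have hbound : ∀ t : ℝ,
      ‖p.derivative.eval (exp (2 * π * I * t)) * (2 * π * I * exp (2 * π * I * t))‖
        ≤ 2 * π * n * S := by
    intro t
    rw [norm_mul, norm_mul, norm_cexp_two_pi_I_mul, mul_one, mul_comm]
    have h2π : ‖2 * (π : ℂ) * I‖ = 2 * π := by simp [abs_of_pos Real.pi_pos]
    rw [h2π, mul_assoc (2 * π)]
    exact mul_le_mul_of_nonneg_left (norm_derivative_eval_le hp hS (norm_cexp_two_pi_I_mul t))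
      (by positivity)
  have := convex_univ.norm_image_sub_le_of_norm_hasDerivWithin_le
    (fun t _ => (hderiv t).hasDerivWithinAt) (fun t _ => hbound t) (Set.mem_univ f₂)
    (Set.mem_univ f₁)
  rw [Real.norm_eq_abs] at this
  linarith

theorem stmt_11_general (M : ℕ) (c : Fin M → ℂ)
    (v : ℝ → ℂ)
    (hv : ∀ f : ℝ, v f = ∑ i : Fin M, c i * Complex.exp (2 * Real.pi * Complex.I * f * i))
    (f₁ f₂ : ℝ) :
    ‖v f₁‖ - ‖v f₂‖
      ≤ 2 * Real.pi * M * |f₁ - f₂| * sSup ((fun f => ‖v f‖) '' Set.Ico (0 : ℝ) 1) := by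
  set p : ℂ[X] := ∑ i : Fin M, C (c i) * X ^ (i : ℕ)
  have hp : p.natDegree ≤ M :=
    natDegree_sum_le_of_forall_le _ _ fun i _ => (natDegree_C_mul_X_pow_le _ _).trans i.isLt.le
  have hvp : ∀ f : ℝ, v f = p.eval (exp (2 * π * I * f)) := fun f => by
    simp only [hv, p, eval_finsetSum, eval_mul, eval_C, eval_pow, eval_X, ← exp_nat_mul,
      mul_comm _ (2 * π * I * f)]
  have hbdd : BddAbove ((fun f => ‖v f‖) '' Set.Ico (0 : ℝ) 1) := by
    refine (IsCompact.bddAbove (isCompact_Icc.image ?_)).mono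
      (Set.image_mono Set.Ico_subset_Icc_self)
    simp only [hvp]
    fun_prop
  have hS : ∀ w : ℂ, ‖w‖ = 1 → ‖p.eval w‖ ≤ sSup ((fun f => ‖v f‖) '' Set.Ico (0 : ℝ) 1) := by
    intro w hw
    obtain ⟨t, ht, rfl⟩ := exists_mem_Ico_cexp_two_pi_I_mul_eq hw
    exact le_csSup hbdd ⟨t, ht, congrArg norm (hvp t)⟩
  calc ‖v f₁‖ - ‖v f₂‖ ≤ ‖v f₁ - v f₂‖ := norm_sub_norm_le _ _
    _ ≤ _ := by rw [hvp, hvp]; exact p.norm_eval_cexp_sub_le hp hS f₁ f₂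

/-- Lipschitz bound on the modulus of a trigonometric polynomial
`v(f) = Σ_{i=0}^{M−1} c_i·exp(2πi·f·i)`:
`|v(f₁)| − |v(f₂)| ≤ 2π·M·|f₁ − f₂|·sup_{f ∈ [0,1)} |v(f)|`. -/
theorem stmt_11 (M : ℕ) (hM : 1 ≤ M) (c : Fin M → ℂ)
    (v : ℝ → ℂ)
    (hv : ∀ f : ℝ, v f = ∑ i : Fin M, c i * Complex.exp (2 * Real.pi * Complex.I * f * i))
    (f₁ f₂ : ℝ) :
    ‖v f₁‖ - ‖v f₂‖
      ≤ 2 * Real.pi * M * |f₁ - f₂| * sSup ((fun f => ‖v f‖) '' Set.Ico (0 : ℝ) 1) :=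
  stmt_11_general M c v hv f₁ f₂
end

section
/- Let M ≥ 1, K ≥ 1 and let N be a positive integer with N > 2πMK. Then for every matrix H ∈ ℂ^{M×K}, (1 − 2πMK/N)^{1/2} · ‖H‖_{𝒜_N} ≤ ‖H‖_𝒜 ≤ ‖H‖_{𝒜_N}. -/
open Complex Matrix

/-- The steering vector `a_M(f) ∈ ℂ^M`, with entries `exp(2πi·f·m)` for `m = 0, …, M−1`. -/
noncomputable def steer (M : ℕ) (f : ℝ) : Fin M → ℂ :=
  fun m => Complex.exp (2 * Real.pi * Complex.I * (f : ℂ) * (m : ℂ))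

/-- The atomic set `𝒜 ⊆ ℂ^{M×K}` of matrices `M^{−1/2}·a_M(f)·u^*` with `f ∈ [0,1)` and
`‖u‖₂ = 1`. -/
noncomputable def atomicSet (M K : ℕ) : Set (Matrix (Fin M) (Fin K) ℂ) :=
  {X | ∃ f ∈ Set.Ico (0 : ℝ) 1, ∃ u : Fin K → ℂ, (∑ k, ‖u k‖ ^ 2 = 1) ∧
    X = ((Real.sqrt M : ℂ))⁻¹ • Matrix.vecMulVec (steer M f) (star u)}

/-- The grid atomic set `𝒜_N ⊆ ℂ^{M×K}` of matrices `M^{−1/2}·a_M(j/N)·u^*` with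
`j ∈ {0, …, N−1}` and `‖u‖₂ = 1`. -/
noncomputable def gridAtomicSet (M K N : ℕ) : Set (Matrix (Fin M) (Fin K) ℂ) :=
  {X | ∃ j : Fin N, ∃ u : Fin K → ℂ, (∑ k, ‖u k‖ ^ 2 = 1) ∧
    X = ((Real.sqrt M : ℂ))⁻¹ • Matrix.vecMulVec (steer M ((j : ℝ) / N)) (star u)}

/-- The atomic norm `‖·‖_𝒜`: the gauge (Minkowski functional) of the convex hull of `𝒜`. -/
noncomputable def atomicNorm (M K : ℕ) (H : Matrix (Fin M) (Fin K) ℂ) : ℝ :=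
  gauge (convexHull ℝ (atomicSet M K)) H

/-- The gridded atomic norm `‖·‖_{𝒜_N}`: the gauge of the convex hull of `𝒜_N`. -/
noncomputable def gridAtomicNorm (M K N : ℕ) (H : Matrix (Fin M) (Fin K) ℂ) : ℝ :=
  gauge (convexHull ℝ (gridAtomicSet M K N)) H

/-! Each continuum atom `M^{-1/2} a_M(f) u^*` is an exact real combination of the grid atoms
`M^{-1/2} a_M(j/N) u^*`: the coefficients are samples `w(f - j/N)` of the de la Vallée-Poussin
kernel `w = (|D_b|² - |D_a|²) / (N (b - a))`, `a = M - 1`, `b = N - M`, whose grid Fourier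
coefficients equal `1` on the frequencies `0, …, M - 1`. Parseval on the grid bounds their
`ℓ¹`-norm by `(N - 1) / (N - 2M + 1) ≤ (1 - 2πMK/N)^{-1/2} =: C`, and since the grid atoms are
symmetric this gives `conv 𝒜_N ⊆ conv 𝒜 ⊆ C • conv 𝒜_N`; comparing gauges yields both bounds. -/

namespace GridAtomicNorm

open Finset Pointwise

noncomputable def expTwoPiI (x : ℝ) : ℂ := Complex.exp (2 * Real.pi * Complex.I * x)

@[simp]
lemma expTwoPiI_zero : expTwoPiI 0 = 1 := by simp [expTwoPiI]

lemma expTwoPiI_add (x y : ℝ) : expTwoPiI (x + y) = expTwoPiI x * expTwoPiI y := by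
  rw [expTwoPiI, expTwoPiI, expTwoPiI, ← Complex.exp_add]
  push_cast
  ring_nf

lemma expTwoPiI_mul_natCast (x : ℝ) (n : ℕ) : expTwoPiI (x * n) = expTwoPiI x ^ n := by
  rw [expTwoPiI, expTwoPiI, ← Complex.exp_nat_mul]
  push_cast
  ring_nf

lemma conj_expTwoPiI (x : ℝ) : starRingEnd ℂ (expTwoPiI x) = expTwoPiI (-x) := by
  rw [expTwoPiI, expTwoPiI, ← Complex.exp_conj]
  simp only [map_mul, Complex.conj_I, Complex.conj_ofReal, map_ofNat]
  push_cast
  ring_nf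

lemma expTwoPiI_eq_one_iff {x : ℝ} : expTwoPiI x = 1 ↔ ∃ n : ℤ, x = n := by
  have h2πI : 2 * (Real.pi : ℂ) * Complex.I ≠ 0 := by simp [Real.pi_ne_zero]
  rw [expTwoPiI, Complex.exp_eq_one_iff]
  refine exists_congr fun n => ⟨fun h => ?_, fun h => by rw [h]; push_cast; ring⟩
  exact_mod_cast mul_left_cancel₀ h2πI (h.trans (mul_comm _ _))

lemma expTwoPiI_intCast (t : ℤ) : expTwoPiI t = 1 :=
  expTwoPiI_eq_one_iff.mpr ⟨t, rfl⟩

lemma steer_apply (M : ℕ) (f : ℝ) (m : Fin M) : steer M f m = expTwoPiI (f * (m : ℕ)) := by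
  rw [steer, expTwoPiI]
  push_cast
  ring_nf

/-- Orthogonality of the characters of `ℤ/Nℤ`, for frequencies `t` that cannot alias. -/
lemma sum_range_expTwoPiI_div_mul {N : ℕ} (hN : 0 < N) {t : ℤ} (ht : |t| < N) :
    ∑ j ∈ range N, expTwoPiI (j / N * t) = if t = 0 then (N : ℂ) else 0 := by
  have hN0 : (N : ℝ) ≠ 0 := by positivity
  split_ifs with h0
  · simp [h0]
  have hr : expTwoPiI (t / N) ≠ 1 := by
    rintro hr
    obtain ⟨n, hn⟩ := expTwoPiI_eq_one_iff.mp hr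
    have htn : t = N * n := by
      rw [div_eq_iff hN0] at hn
      exact_mod_cast hn.trans (mul_comm _ _)
    exact h0 (Int.eq_zero_of_abs_lt_dvd ⟨n, htn⟩ ht)
  have hpow : ∀ j : ℕ, expTwoPiI (j / N * t) = expTwoPiI (t / N) ^ j := fun j => by
    rw [← expTwoPiI_mul_natCast]
    ring_nf
  simp only [hpow]
  rw [geom_sum_eq hr, ← expTwoPiI_mul_natCast, div_mul_cancel₀ _ hN0, expTwoPiI_intCast,
    sub_self, zero_div]

noncomputable def dirichletSum (n : ℕ) (x : ℝ) : ℂ := ∑ m ∈ range n, expTwoPiI (x * m)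

lemma normSq_dirichletSum (n : ℕ) (x : ℝ) :
    (Complex.normSq (dirichletSum n x) : ℂ)
      = ∑ m₁ ∈ range n, ∑ m₂ ∈ range n, expTwoPiI (x * m₁ - x * m₂) := by
  rw [← Complex.mul_conj, dirichletSum, map_sum, sum_mul_sum]
  refine sum_congr rfl fun m₁ _ => sum_congr rfl fun m₂ _ => ?_
  rw [conj_expTwoPiI, ← expTwoPiI_add, sub_eq_add_neg]

/-- Multiplying by `e(jm/N)` and summing over the grid picks out the `m`-th Fourier coefficient
of `|D_n|²`, which is `n - m`; the bound `n + m ≤ N` rules out aliasing. -/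
lemma sum_normSq_dirichletSum_mul {N n m : ℕ} (hN : 0 < N) (hnm : n + m ≤ N) (f : ℝ) :
    ∑ j ∈ range N, (Complex.normSq (dirichletSum n (f - j / N)) : ℂ) * expTwoPiI (j / N * m)
      = N * (n - m : ℕ) * expTwoPiI (f * m) := by
  have hterm : ∀ (j m₁ m₂ : ℕ),
      expTwoPiI ((f - j / N) * m₁ - (f - j / N) * m₂) * expTwoPiI (j / N * m)
        = expTwoPiI (f * m₁ - f * m₂) * expTwoPiI (j / N * ((m - m₁ + m₂ : ℤ) : ℝ)) := by
    intro j m₁ m₂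
    rw [← expTwoPiI_add, ← expTwoPiI_add]
    push_cast
    ring_nf
  have hgrid : ∀ m₁ ∈ range n, ∀ m₂ ∈ range n,
      expTwoPiI (f * m₁ - f * m₂) * ∑ j ∈ range N, expTwoPiI (j / N * ((m - m₁ + m₂ : ℤ) : ℝ))
        = if m₁ = m + m₂ then N * expTwoPiI (f * m) else 0 := by
    intro m₁ hm₁ m₂ hm₂
    rw [mem_range] at hm₁ hm₂
    rw [sum_range_expTwoPiI_div_mul hN (by rw [abs_lt]; constructor <;> omega)]
    by_cases h : m₁ = m + m₂
    · rw [if_pos (by omega), if_pos h, h]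
      push_cast
      ring_nf
    · rw [if_neg (by omega), if_neg h, mul_zero]
  have hcount : (range n).filter (fun m₂ => m + m₂ ∈ range n) = range (n - m) := by
    ext m₂
    simp only [mem_filter, mem_range]
    omega
  calc ∑ j ∈ range N, (Complex.normSq (dirichletSum n (f - j / N)) : ℂ) * expTwoPiI (j / N * m)
      = ∑ m₁ ∈ range n, ∑ m₂ ∈ range n, ∑ j ∈ range N,
          expTwoPiI (f * m₁ - f * m₂) * expTwoPiI (j / N * ((m - m₁ + m₂ : ℤ) : ℝ)) := by
        simp_rw [normSq_dirichletSum, sum_mul, hterm]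
        rw [sum_comm]
        exact sum_congr rfl fun _ _ => sum_comm
    _ = ∑ m₂ ∈ range n, ∑ m₁ ∈ range n, if m₁ = m + m₂ then N * expTwoPiI (f * m) else 0 := by
        rw [sum_comm]
        simp_rw [← mul_sum]
        exact sum_congr rfl fun m₂ hm₂ => sum_congr rfl fun m₁ hm₁ => hgrid m₁ hm₁ m₂ hm₂
    _ = N * (n - m : ℕ) * expTwoPiI (f * m) := by
        simp_rw [sum_ite_eq', ← sum_filter, hcount, sum_const, card_range, nsmul_eq_mul]
        ring

lemma sum_normSq_dirichletSum {N n : ℕ} (hN : 0 < N) (hn : n ≤ N) (f : ℝ) :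
    ∑ j ∈ range N, Complex.normSq (dirichletSum n (f - j / N)) = N * n := by
  have h := sum_normSq_dirichletSum_mul (m := 0) hN (by omega) f
  simp only [Nat.cast_zero, mul_zero, expTwoPiI_zero, mul_one, Nat.sub_zero] at h
  exact_mod_cast h

/-- The de la Vallée-Poussin kernel `(b·F_b - a·F_a) / (b - a)` built from Fejér kernels
`F_n = |D_n|² / n`, normalised for sampling on the grid `j / N`. -/
noncomputable def vallePoussinKernel (N a b : ℕ) (x : ℝ) : ℝ :=
  (Complex.normSq (dirichletSum b x) - Complex.normSq (dirichletSum a x)) / (N * ((b : ℝ) - a))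

lemma sum_vallePoussinKernel_mul {N a b m : ℕ} (hab : a < b) (hma : m ≤ a) (hbm : b + m ≤ N)
    (f : ℝ) :
    ∑ j ∈ range N, (vallePoussinKernel N a b (f - j / N) : ℂ) * expTwoPiI (j / N * m)
      = expTwoPiI (f * m) := by
  have hN : 0 < N := by omega
  have hden : (N : ℂ) * ((b : ℂ) - a) ≠ 0 := by
    have : (a : ℂ) ≠ b := by exact_mod_cast hab.ne
    exact mul_ne_zero (by exact_mod_cast hN.ne') (sub_ne_zero.mpr this.symm)
  have hterm : ∀ j : ℕ,
      (vallePoussinKernel N a b (f - j / N) : ℂ) * expTwoPiI (j / N * m)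
        = ((Complex.normSq (dirichletSum b (f - j / N)) : ℂ) * expTwoPiI (j / N * m)
          - (Complex.normSq (dirichletSum a (f - j / N)) : ℂ) * expTwoPiI (j / N * m))
          / (N * ((b : ℂ) - a)) := fun j => by
    rw [vallePoussinKernel]
    push_cast
    ring
  rw [sum_congr rfl fun j _ => hterm j, ← sum_div, sum_sub_distrib,
    sum_normSq_dirichletSum_mul hN hbm,
    sum_normSq_dirichletSum_mul hN (by omega : a + m ≤ N)]
  rw [div_eq_iff (by exact_mod_cast hden)]
  push_cast [Nat.cast_sub hma, Nat.cast_sub (hma.trans hab.le)]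
  ring

lemma sum_abs_vallePoussinKernel_le {N a b : ℕ} (hab : a < b) (hbN : b ≤ N) (f : ℝ) :
    ∑ j ∈ range N, |vallePoussinKernel N a b (f - j / N)| ≤ ((a : ℝ) + b) / ((b : ℝ) - a) := by
  have hN : 0 < N := by omega
  have hba : (0 : ℝ) < (b : ℝ) - a := sub_pos.mpr (by exact_mod_cast hab)
  have hden : (0 : ℝ) < N * ((b : ℝ) - a) := mul_pos (by exact_mod_cast hN) hba
  calc ∑ j ∈ range N, |vallePoussinKernel N a b (f - j / N)|
      ≤ ∑ j ∈ range N, (Complex.normSq (dirichletSum b (f - j / N))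
          + Complex.normSq (dirichletSum a (f - j / N))) / (N * ((b : ℝ) - a)) := by
        refine sum_le_sum fun j _ => ?_
        rw [vallePoussinKernel, abs_div, abs_of_pos hden]
        gcongr
        have := Complex.normSq_nonneg (dirichletSum b (f - j / N))
        have := Complex.normSq_nonneg (dirichletSum a (f - j / N))
        exact abs_sub_le_of_nonneg_of_le (by positivity) (by linarith) (by positivity) (by linarith)
    _ = ((a : ℝ) + b) / ((b : ℝ) - a) := by
        rw [← sum_div, sum_add_distrib, sum_normSq_dirichletSum hN hbN,
          sum_normSq_dirichletSum hN (hab.le.trans hbN), div_eq_div_iff hden.ne' hba.ne']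
        ring

lemma steer_eq_sum_vallePoussinKernel_smul {M N : ℕ} (hMN : 2 * M ≤ N) (f : ℝ) :
    steer M f = ∑ j ∈ range N, vallePoussinKernel N (M - 1) (N - M) (f - j / N) • steer M (j / N) := by
  funext m
  have hm := m.isLt
  simp only [Finset.sum_apply, Pi.smul_apply, steer_apply, Complex.real_smul]
  exact (sum_vallePoussinKernel_mul (a := M - 1) (b := N - M) (m := m) (by omega) (by omega)
    (by omega) f).symm

section Convex

variable {V : Type*} [AddCommGroup V] [Module ℝ V] {s t : Set V}

lemma zero_mem_convexHull_of_neg_mem (hneg : ∀ x ∈ s, -x ∈ s) (hs : s.Nonempty) :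
    (0 : V) ∈ convexHull ℝ s := by
  obtain ⟨x, hx⟩ := hs
  have h := convex_convexHull ℝ s (subset_convexHull ℝ s hx) (subset_convexHull ℝ s (hneg x hx))
    (by norm_num : (0 : ℝ) ≤ 1 / 2) (by norm_num : (0 : ℝ) ≤ 1 / 2) (by norm_num)
  rwa [smul_neg, add_neg_cancel] at h

/-- Flip the signs of the `cᵢ` into the points, then rescale a convex combination. -/
lemma sum_smul_mem_smul_convexHull {ι : Type*} (hneg : ∀ x ∈ s, -x ∈ s)
    (h0 : (0 : V) ∈ convexHull ℝ s) {I : Finset ι} {c : ι → ℝ} {x : ι → V}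
    (hx : ∀ i ∈ I, x i ∈ s) {C : ℝ} (hC : ∑ i ∈ I, |c i| ≤ C) :
    ∑ i ∈ I, c i • x i ∈ C • convexHull ℝ s := by
  set y : ι → V := fun i => if 0 ≤ c i then x i else -x i
  have hy : ∀ i ∈ I, y i ∈ s := fun i hi => by
    simp only [y]
    split_ifs
    exacts [hx i hi, hneg _ (hx i hi)]
  have hcy : ∀ i, c i • x i = |c i| • y i := fun i => by
    simp only [y]
    split_ifs with h
    · rw [abs_of_nonneg h]
    · rw [abs_of_neg (not_le.mp h), neg_smul, smul_neg, neg_neg]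
  simp_rw [hcy]
  rcases (sum_nonneg fun i _ => abs_nonneg (c i) : 0 ≤ ∑ i ∈ I, |c i|).eq_or_lt with hW | hW
  · rw [sum_eq_zero fun i hi => by
      rw [(sum_eq_zero_iff_of_nonneg fun i _ => abs_nonneg (c i)).mp hW.symm i hi, zero_smul]]
    exact Set.zero_mem_smul_set h0
  have hCpos : 0 < C := hW.trans_le hC
  have hcenter := I.centerMass_mem_convexHull (fun i _ => abs_nonneg (c i)) hW hy
  have hscaled := (convex_convexHull ℝ s).starConvex h0 |>.smul_mem hcenter
    (div_nonneg hW.le hCpos.le) ((div_le_one hCpos).mpr hC)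
  convert Set.smul_mem_smul_set (a := C) hscaled using 1
  rw [Finset.centerMass, smul_smul, smul_smul, mul_div_cancel₀ _ hCpos.ne',
    mul_inv_cancel₀ hW.ne', one_smul]

lemma gauge_le_gauge_of_subset_of_subset_smul {c : ℝ} (hc : 0 < c) (hst : s ⊆ t)
    (hts : t ⊆ c • s) (x : V) : gauge t x ≤ gauge s x := by
  rw [gauge_def, gauge_def]
  by_cases hne : {r ∈ Set.Ioi (0 : ℝ) | x ∈ r • s}.Nonempty
  · exact csInf_le_csInf ⟨0, fun r hr => hr.1.le⟩ hne
      fun r hr => ⟨hr.1, Set.smul_set_mono hst hr.2⟩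
  · have hempty : {r ∈ Set.Ioi (0 : ℝ) | x ∈ r • t} = ∅ := by
      refine Set.eq_empty_of_forall_notMem fun r hr => hne ⟨r * c, mul_pos hr.1 hc, ?_⟩
      rw [mul_smul]
      exact Set.smul_set_mono hts hr.2
    rw [Set.not_nonempty_iff_eq_empty.mp hne, hempty]

end Convex

lemma sub_one_div_le_inv_rpow_one_sub {M K N : ℝ} (hM : 1 ≤ M) (hK : 1 ≤ K)
    (hN : 2 * Real.pi * M * K < N) :
    (N - 1) / (N - 2 * M + 1) ≤ ((1 - 2 * Real.pi * M * K / N) ^ ((1 : ℝ) / 2))⁻¹ := by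
  set ε := 2 * Real.pi * M * K / N
  have hπ := Real.pi_gt_three
  have hq : 3 * M ≤ Real.pi * M * K := by
    nlinarith [mul_le_mul_of_nonneg_left hK (by positivity : 0 ≤ Real.pi * M)]
  have hN0 : 0 < N := by nlinarith
  have hεN : ε * N = 2 * Real.pi * M * K := div_mul_cancel₀ _ hN0.ne'
  have hε1 : ε < 1 := (div_lt_one hN0).mpr hN
  have hε0 : 0 < ε := by positivity
  have hsqrt : (1 - ε) ^ ((1 : ℝ) / 2) ≤ 1 - ε / 2 := by
    rw [← Real.sqrt_eq_rpow, Real.sqrt_le_left (by linarith)]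
    nlinarith
  calc (N - 1) / (N - 2 * M + 1) ≤ (1 - ε / 2)⁻¹ := by
        rw [div_le_iff₀ (by nlinarith), inv_mul_eq_div, le_div_iff₀ (by linarith)]
        nlinarith
    _ ≤ _ := inv_anti₀ (Real.rpow_pos_of_pos (by linarith) _) hsqrt

lemma gridAtomicSet_subset_atomicSet (M K N : ℕ) : gridAtomicSet M K N ⊆ atomicSet M K := by
  rintro X ⟨j, u, hu, rfl⟩
  have hN : (0 : ℝ) < N := by exact_mod_cast j.pos
  exact ⟨j / N, ⟨by positivity, (div_lt_one hN).mpr (by exact_mod_cast j.isLt)⟩, u, hu, rfl⟩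

lemma neg_mem_gridAtomicSet {M K N : ℕ} {X : Matrix (Fin M) (Fin K) ℂ}
    (hX : X ∈ gridAtomicSet M K N) : -X ∈ gridAtomicSet M K N := by
  obtain ⟨j, u, hu, rfl⟩ := hX
  exact ⟨j, -u, by simpa using hu, by rw [star_neg, vecMulVec_neg, smul_neg]⟩

lemma gridAtomicSet_nonempty (M : ℕ) {K N : ℕ} (hK : 0 < K) (hN : 0 < N) :
    (gridAtomicSet M K N).Nonempty :=
  ⟨_, ⟨⟨0, hN⟩, Pi.single ⟨0, hK⟩ 1, by
    rw [Fintype.sum_eq_single ⟨0, hK⟩ fun k hk => by simp [hk]]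
    simp, rfl⟩⟩

lemma atomicSet_subset_smul_convexHull_gridAtomicSet {M K N : ℕ} (hM : 1 ≤ M) (hK : 1 ≤ K)
    (hMN : 2 * M ≤ N) {C : ℝ} (hC : ((N : ℝ) - 1) / (N - 2 * M + 1) ≤ C) :
    atomicSet M K ⊆ C • convexHull ℝ (gridAtomicSet M K N) := by
  rintro X ⟨f, -, u, hu, rfl⟩
  have hdecomp : ((Real.sqrt M : ℂ))⁻¹ • vecMulVec (steer M f) (star u)
      = ∑ j ∈ range N, vallePoussinKernel N (M - 1) (N - M) (f - j / N) •
          ((Real.sqrt M : ℂ))⁻¹ • vecMulVec (steer M (j / N)) (star u) := by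
    rw [steer_eq_sum_vallePoussinKernel_smul hMN f]
    ext i k
    simp only [Matrix.sum_apply, Matrix.smul_apply, vecMulVec_apply, Finset.sum_apply,
      Pi.smul_apply, smul_eq_mul, Complex.real_smul, sum_mul, mul_sum]
    exact sum_congr rfl fun j _ => by ring
  have hbound : ∑ j ∈ range N, |vallePoussinKernel N (M - 1) (N - M) (f - j / N)| ≤ C := by
    refine (sum_abs_vallePoussinKernel_le (by omega) (by omega) f).trans (le_of_eq_of_le ?_ hC)
    push_cast [Nat.cast_sub hM, Nat.cast_sub (by omega : M ≤ N)]
    ring_nf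
  rw [hdecomp]
  refine sum_smul_mem_smul_convexHull (fun _ => neg_mem_gridAtomicSet)
    (zero_mem_convexHull_of_neg_mem (fun _ => neg_mem_gridAtomicSet)
      (gridAtomicSet_nonempty M hK (by omega))) (fun j hj => ?_) hbound
  exact ⟨⟨j, mem_range.mp hj⟩, u, hu, rfl⟩

end GridAtomicNorm

open GridAtomicNorm Pointwise

/-- for `N > 2πMK`, the gridded atomic norm sandwiches the continuum atomic
norm: `(1 − 2πMK/N)^{1/2}·‖H‖_{𝒜_N} ≤ ‖H‖_𝒜 ≤ ‖H‖_{𝒜_N}`. -/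
theorem stmt_14 (M K N : ℕ) (hM : 1 ≤ M) (hK : 1 ≤ K) (hN : 2 * Real.pi * M * K < N)
    (H : Matrix (Fin M) (Fin K) ℂ) :
    (1 - 2 * Real.pi * M * K / N) ^ ((1 : ℝ) / 2) * gridAtomicNorm M K N H
        ≤ atomicNorm M K H ∧
      atomicNorm M K H ≤ gridAtomicNorm M K N H := by
  have hMr : (1 : ℝ) ≤ M := by exact_mod_cast hM
  have hKr : (1 : ℝ) ≤ K := by exact_mod_cast hK
  have hMN : 2 * M ≤ N := by
    have : 3 * (M : ℝ) ≤ Real.pi * M * K := by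
      nlinarith [Real.pi_gt_three, mul_le_mul_of_nonneg_left hKr (by positivity : 0 ≤ Real.pi * M)]
    exact_mod_cast (by linarith : (2 * M : ℝ) ≤ N)
  have hN0 : (0 : ℝ) < N := lt_of_le_of_lt (by positivity) hN
  set C := ((1 - 2 * Real.pi * M * K / N) ^ ((1 : ℝ) / 2))⁻¹
  have hC : 0 < C := inv_pos.mpr (Real.rpow_pos_of_pos (sub_pos.mpr ((div_lt_one hN0).mpr hN)) _)
  have hgrid : convexHull ℝ (gridAtomicSet M K N) ⊆ convexHull ℝ (atomicSet M K) :=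
    convexHull_mono (gridAtomicSet_subset_atomicSet M K N)
  have hatomic : convexHull ℝ (atomicSet M K) ⊆ C • convexHull ℝ (gridAtomicSet M K N) :=
    convexHull_min (atomicSet_subset_smul_convexHull_gridAtomicSet hM hK hMN
        (sub_one_div_le_inv_rpow_one_sub hMr hKr hN))
      ((convex_convexHull ℝ _).smul C)
  refine ⟨?_, gauge_le_gauge_of_subset_of_subset_smul hC hgrid hatomic H⟩
  have h := gauge_le_gauge_of_subset_of_subset_smul hC hatomic (Set.smul_set_mono hgrid) H
  rwa [gauge_smul_left_of_nonneg hC.le, Pi.smul_apply, smul_eq_mul, inv_inv] at h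
end

section
/- Let M ≥ 1, K ≥ 1 and N ≥ M, and let F ∈ ℂ^{M×N} be the matrix whose j-th column is a_M(j/N) for j = 0, …, N−1. Then for every H ∈ ℂ^{M×K}, ‖H‖_{𝒜_N} = √M · inf { Σ_{j=0}^{N−1} ‖C_{(j,:)}‖₂ : C ∈ ℂ^{N×K}, H = F·C }, i.e. the gridded atomic norm equals √M times the minimum row-wise ℓ_{2,1} norm over all coefficient matrices C representing H through the partial DFT-type matrix F. -/
open Complex Matrix

/-!
Every grid atom is `(√M)⁻¹ • F * X` for a matrix `X` with a single nonzero row, of unit norm.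
The convex hull of these one-row matrices is the unit ball of the row-wise `ℓ_{2,1}` norm
(split `C` into its rows and pad the convex combination with an atom and its negative), so the
convex hull of the grid atoms is the image of that ball under `C ↦ (√M)⁻¹ • F * C`, and the gauge
of the image of a ball at `H` is the infimum of the norm over the preimages of `H`. These exist
because the first `M` columns of `F` form a Vandermonde matrix in distinct `N`-th roots of unity.
-/

open Pointwise

theorem Convex.sum_smul_mem_of_zero_mem {𝕜 E ι : Type*} [Field 𝕜] [LinearOrder 𝕜]
    [IsStrictOrderedRing 𝕜] [AddCommGroup E] [Module 𝕜 E] [Fintype ι] {s : Set E} (hs : Convex 𝕜 s)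
    (h0 : (0 : E) ∈ s) {w : ι → 𝕜} {z : ι → E}
    (hw₀ : ∀ i, 0 ≤ w i) (hw₁ : ∑ i, w i ≤ 1) (hz : ∀ i, z i ∈ s) : ∑ i, w i • z i ∈ s := by
  have := hs.sum_mem (t := Finset.univ) (w := Option.elim' (1 - ∑ i, w i) w)
    (z := Option.elim' 0 z) (by rintro (_ | i) -; exacts [sub_nonneg.2 hw₁, hw₀ i])
    (by simp [Fintype.sum_option]) (by rintro (_ | i) -; exacts [h0, hz i])
  simpa [Fintype.sum_option] using this

theorem gauge_eq_sInf_of_mem_smul_iff {E : Type*} [AddCommGroup E] [Module ℝ E] {s : Set E}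
    {x : E} {A : Set ℝ} (hA : A.Nonempty) (hA₀ : ∀ a ∈ A, 0 ≤ a)
    (h : ∀ t > 0, x ∈ t • s ↔ ∃ a ∈ A, a ≤ t) : gauge s x = sInf A := by
  have hA_bdd : BddBelow A := ⟨0, hA₀⟩
  have mem_of_lt : ∀ a ∈ A, ∀ t, a < t → x ∈ t • s := fun a ha t hat =>
    (h t ((hA₀ a ha).trans_lt hat)).2 ⟨a, ha, hat.le⟩
  apply le_antisymm
  · refine le_of_forall_gt_imp_ge_of_dense fun t ht => ?_
    obtain ⟨a, ha, hat⟩ := exists_lt_of_csInf_lt hA ht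
    exact gauge_le_of_mem ((hA₀ a ha).trans hat.le) (mem_of_lt a ha t hat)
  · obtain ⟨a, ha⟩ := hA
    rw [gauge_def]
    refine le_csInf ⟨a + 1, add_pos_of_nonneg_of_pos (hA₀ a ha) one_pos,
      mem_of_lt a ha _ (lt_add_one a)⟩ ?_
    rintro t ⟨ht, hxt⟩
    obtain ⟨b, hb, hbt⟩ := (h t ht).1 hxt
    exact (csInf_le hA_bdd hb).trans hbt

namespace Matrix

variable {ι κ : Type*} [Fintype κ]

theorem sqrt_sum_norm_sq_eq_norm_toLp (v : κ → ℂ) :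
    √(∑ k, ‖v k‖ ^ 2) = ‖(WithLp.toLp 2 v : EuclideanSpace ℂ κ)‖ :=
  (EuclideanSpace.norm_eq _).symm

theorem sqrt_sum_norm_sq_eq_zero_iff {v : κ → ℂ} : √(∑ k, ‖v k‖ ^ 2) = 0 ↔ v = 0 := by
  rw [sqrt_sum_norm_sq_eq_norm_toLp, norm_eq_zero, WithLp.toLp_eq_zero]

theorem sqrt_sum_norm_sq_smul_inv_smul (v : κ → ℂ) :
    √(∑ k, ‖v k‖ ^ 2) • (√(∑ k, ‖v k‖ ^ 2))⁻¹ • v = v := by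
  by_cases h : √(∑ k, ‖v k‖ ^ 2) = 0
  · rw [sqrt_sum_norm_sq_eq_zero_iff.1 h, smul_zero, smul_zero]
  · rw [smul_inv_smul₀ h]

section

variable [DecidableEq ι]

def rowAtoms (ι κ : Type*) [Fintype κ] [DecidableEq ι] : Set (Matrix ι κ ℂ) :=
  {X | ∃ i, ∃ v : κ → ℂ, ∑ k, ‖v k‖ ^ 2 = 1 ∧ X = of (Pi.single i v)}

theorem neg_mem_rowAtoms {X : Matrix ι κ ℂ} (hX : X ∈ rowAtoms ι κ) : -X ∈ rowAtoms ι κ := by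
  obtain ⟨i, v, hv, rfl⟩ := hX
  exact ⟨i, -v, by simpa using hv, by rw [Pi.single_neg]; rfl⟩

theorem zero_mem_convexHull_rowAtoms [Nonempty ι] [Nonempty κ] :
    (0 : Matrix ι κ ℂ) ∈ convexHull ℝ (rowAtoms ι κ) := by
  classical
  obtain ⟨i⟩ := ‹Nonempty ι›
  obtain ⟨k⟩ := ‹Nonempty κ›
  have hX : of (Pi.single i (Pi.single k 1)) ∈ rowAtoms ι κ :=
    ⟨i, _, by simp [Pi.single_apply, apply_ite (fun z : ℂ => ‖z‖ ^ 2)], rfl⟩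
  have := convex_convexHull ℝ (rowAtoms ι κ) (subset_convexHull ℝ _ hX)
    (subset_convexHull ℝ _ (neg_mem_rowAtoms hX)) (a := 1 / 2) (b := 1 / 2)
    (by norm_num) (by norm_num) (by norm_num)
  simpa using this

end

variable [Fintype ι]

noncomputable def rowL21 : Seminorm ℝ (Matrix ι κ ℂ) :=
  Seminorm.of (fun C => ∑ i, √(∑ k, ‖C i k‖ ^ 2))
    (fun C D => by
      simp only [sqrt_sum_norm_sq_eq_norm_toLp, ← Finset.sum_add_distrib]
      refine Finset.sum_le_sum fun i _ => ?_
      rw [show (C + D) i = C i + D i from rfl, WithLp.toLp_add]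
      exact norm_add_le _ _)
    (fun c C => by
      simp only [sqrt_sum_norm_sq_eq_norm_toLp, Finset.mul_sum, ← norm_smul]; rfl)

theorem rowL21_apply (C : Matrix ι κ ℂ) : rowL21 C = ∑ i, √(∑ k, ‖C i k‖ ^ 2) := rfl

variable [DecidableEq ι]

theorem rowL21_of_single (i : ι) (v : κ → ℂ) :
    rowL21 (of (Pi.single i v)) = √(∑ k, ‖v k‖ ^ 2) := by
  rw [rowL21_apply, Finset.sum_eq_single i]
  · simp
  · intro j _ hj; simp [hj]
  · simp

theorem convexHull_rowAtoms [Nonempty ι] [Nonempty κ] :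
    convexHull ℝ (rowAtoms ι κ) = rowL21.closedBall 0 1 := by
  apply le_antisymm
  · refine convexHull_min ?_ (rowL21.convex_closedBall 0 1)
    rintro _ ⟨i, v, hv, rfl⟩
    simp [rowL21_of_single, hv]
  · intro C hC
    rw [Seminorm.mem_closedBall_zero, rowL21_apply] at hC
    have hrow : ∀ i, of (Pi.single i ((√(∑ k, ‖C i k‖ ^ 2))⁻¹ • C i)) ∈
        convexHull ℝ (rowAtoms ι κ) := by
      intro i
      by_cases h : C i = 0
      · simpa [h] using zero_mem_convexHull_rowAtoms
      · refine subset_convexHull ℝ _ ⟨i, _, ?_, rfl⟩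
        have hr : √(∑ k, ‖C i k‖ ^ 2) ≠ 0 := by
          rwa [Ne, sqrt_sum_norm_sq_eq_zero_iff]
        rw [← Real.sqrt_eq_one, sqrt_sum_norm_sq_eq_norm_toLp, WithLp.toLp_smul, norm_smul,
          ← sqrt_sum_norm_sq_eq_norm_toLp, Real.norm_eq_abs, abs_inv,
          abs_of_nonneg (Real.sqrt_nonneg _), inv_mul_cancel₀ hr]
    convert (convex_convexHull ℝ _).sum_smul_mem_of_zero_mem zero_mem_convexHull_rowAtoms
      (w := fun i => √(∑ k, ‖C i k‖ ^ 2)) (fun i => Real.sqrt_nonneg _) hC hrow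
    conv_lhs => rw [← Finset.univ_sum_single C]
    refine Finset.sum_congr rfl fun i _ => ?_
    rw [smul_of, ← Pi.single_smul, sqrt_sum_norm_sq_smul_inv_smul]; rfl

theorem mem_smul_convexHull_image_rowAtoms_iff {μ : Type*} [Nonempty ι] [Nonempty κ]
    (F : Matrix μ ι ℂ) {t : ℝ} (ht : 0 < t) (H : Matrix μ κ ℂ) :
    H ∈ t • convexHull ℝ ((fun C : Matrix ι κ ℂ => F * C) '' rowAtoms ι κ) ↔
      ∃ C : Matrix ι κ ℂ, H = F * C ∧ rowL21 C ≤ t := by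
  have h := (mulLeftLinearMap κ ℝ F).image_convexHull (rowAtoms ι κ)
  simp only [mulLeftLinearMap_apply] at h
  rw [← h, convexHull_rowAtoms]
  constructor
  · rintro ⟨_, ⟨D, hD, rfl⟩, rfl⟩
    rw [Seminorm.mem_closedBall_zero] at hD
    refine ⟨t • D, (Matrix.mul_smul F t D).symm, ?_⟩
    rw [map_smul_eq_mul, Real.norm_of_nonneg ht.le]
    exact mul_le_of_le_one_right ht.le hD
  · rintro ⟨C, rfl, hC⟩
    refine ⟨F * t⁻¹ • C, ⟨t⁻¹ • C, ?_, rfl⟩, ?_⟩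
    · rw [Seminorm.mem_closedBall_zero, map_smul_eq_mul,
        Real.norm_of_nonneg (inv_nonneg.2 ht.le)]
      exact inv_mul_le_one_of_le₀ hC ht.le
    · change t • (F * t⁻¹ • C) = F * C
      rw [Matrix.mul_smul, smul_inv_smul₀ ht.ne']

theorem gauge_convexHull_image_rowAtoms {μ : Type*} [Nonempty ι] [Nonempty κ]
    (F : Matrix μ ι ℂ) {H : Matrix μ κ ℂ} (hH : ∃ C : Matrix ι κ ℂ, H = F * C) :
    gauge (convexHull ℝ ((fun C : Matrix ι κ ℂ => F * C) '' rowAtoms ι κ)) H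
      = sInf (rowL21 '' {C : Matrix ι κ ℂ | H = F * C}) := by
  obtain ⟨C₀, hC₀⟩ := hH
  refine gauge_eq_sInf_of_mem_smul_iff ⟨_, C₀, hC₀, rfl⟩
    (by rintro _ ⟨C, -, rfl⟩; exact apply_nonneg _ _) fun t ht => ?_
  rw [mem_smul_convexHull_image_rowAtoms_iff F ht]
  simp only [Set.exists_mem_image, Set.mem_ofPred_eq]

end Matrix

theorem Matrix.mul_of_single {μ ι κ : Type*} [Fintype ι] [DecidableEq ι] (F : Matrix μ ι ℂ)
    (j : ι) (v : κ → ℂ) :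
    F * of (Pi.single j v) = vecMulVec (fun m => F m j) v := by
  ext m k
  rw [mul_apply, vecMulVec_apply, Finset.sum_eq_single j] <;> simp_all

theorem Matrix.exists_eq_mul_of_isUnit_det_submatrix {R m n p : Type*} [CommRing R] [Fintype m]
    [DecidableEq m] [Fintype n] [DecidableEq n] (F : Matrix m n R) (e : m → n)
    (he : IsUnit (F.submatrix id e).det) (H : Matrix m p R) : ∃ C : Matrix n p R, H = F * C := by
  refine ⟨((1 : Matrix n n R).submatrix id e * (F.submatrix id e)⁻¹ * H : Matrix n p R), ?_⟩
  have hF : F * (1 : Matrix n n R).submatrix id e = F.submatrix id e := by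
    ext; simp [mul_apply, one_apply]
  rw [← Matrix.mul_assoc, ← Matrix.mul_assoc, hF, mul_nonsing_inv _ he, Matrix.one_mul]

open Matrix

theorem steer_div_eq_pow (M N j : ℕ) (m : Fin M) :
    steer M ((j : ℝ) / N) m = (exp (2 * Real.pi * I / N) ^ j) ^ (m : ℕ) := by
  rw [steer, ← pow_mul, ← exp_nat_mul]
  push_cast
  ring_nf

theorem exists_eq_mul_of_steer {M K N : ℕ} (hN₀ : N ≠ 0) (hN : M ≤ N)
    {F : Matrix (Fin M) (Fin N) ℂ}
    (hF : ∀ m j, F m j = steer M ((j : ℝ) / N) m) (H : Matrix (Fin M) (Fin K) ℂ) :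
    ∃ C : Matrix (Fin N) (Fin K) ℂ, H = F * C := by
  set ζ := exp (2 * Real.pi * I / N)
  have hζ : IsPrimitiveRoot ζ N := isPrimitiveRoot_exp N hN₀
  have hV : F.submatrix id (Fin.castLE hN) = (vandermonde fun i : Fin M => ζ ^ (i : ℕ))ᵀ := by
    ext m i
    simp [hF, steer_div_eq_pow, ζ, vandermonde]
  refine exists_eq_mul_of_isUnit_det_submatrix F (Fin.castLE hN) ?_ H
  rw [hV, det_transpose, isUnit_iff_ne_zero, det_vandermonde_ne_zero_iff]
  intro i j hij
  exact Fin.ext (hζ.pow_inj (i.2.trans_le hN) (j.2.trans_le hN) hij)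

theorem gridAtomicSet_eq_smul_image {M K N : ℕ} {F : Matrix (Fin M) (Fin N) ℂ}
    (hF : ∀ m j, F m j = steer M ((j : ℝ) / N) m) :
    gridAtomicSet M K N
      = (√M)⁻¹ • (fun C : Matrix (Fin N) (Fin K) ℂ => F * C) '' rowAtoms (Fin N) (Fin K) := by
  have hcol (j : Fin N) : (fun m => F m j) = steer M ((j : ℝ) / N) := funext fun m => hF m j
  ext X
  simp only [gridAtomicSet, rowAtoms, Set.mem_smul_set, Set.mem_image, Set.mem_ofPred_eq]
  constructor
  · rintro ⟨j, u, hu, rfl⟩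
    refine ⟨_, ⟨_, ⟨j, star u, by simpa using hu, rfl⟩, rfl⟩, ?_⟩
    rw [mul_of_single, hcol, ← coe_smul, ofReal_inv]
  · rintro ⟨_, ⟨_, ⟨j, v, hv, rfl⟩, rfl⟩, rfl⟩
    refine ⟨j, star v, by simpa using hv, ?_⟩
    rw [mul_of_single, hcol, star_star, ← coe_smul, ofReal_inv]

/-- the gridded atomic norm equals `√M` times the minimum row-wise `ℓ_{2,1}`
norm over all coefficient matrices `C ∈ ℂ^{N×K}` with `H = F·C`, where `F ∈ ℂ^{M×N}` is the
partial-DFT-type matrix whose `j`-th column is `a_M(j/N)`. -/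
theorem stmt_15 (M K N : ℕ) (hM : 1 ≤ M) (hK : 1 ≤ K) (hN : M ≤ N)
    (F : Matrix (Fin M) (Fin N) ℂ) (hF : ∀ m j, F m j = steer M ((j : ℝ) / N) m)
    (H : Matrix (Fin M) (Fin K) ℂ) :
    gridAtomicNorm M K N H
      = Real.sqrt M * sInf ((fun C : Matrix (Fin N) (Fin K) ℂ =>
          ∑ j, Real.sqrt (∑ k, ‖C j k‖ ^ 2)) '' {C | H = F * C}) := by
  have hN₀ : N ≠ 0 := by omega
  have : NeZero N := ⟨hN₀⟩
  have : Nonempty (Fin K) := ⟨⟨0, hK⟩⟩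
  rw [gridAtomicNorm, gridAtomicSet_eq_smul_image hF, convexHull_smul,
    gauge_smul_left_of_nonneg (inv_nonneg.2 (Real.sqrt_nonneg _)), inv_inv, Pi.smul_apply,
    smul_eq_mul, gauge_convexHull_image_rowAtoms F (exists_eq_mul_of_steer hN₀ hN hF H)]
  rfl
end
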